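/- Let n ≥ 1 and let L₁,…,L_K be arbitrary 2^n×2^n complex matrices. Then for any vectors φ_a, φ_b ∈ ℂ^{2^n}, the average over all 4^n n-qubit Pauli operators U satisfies (1/4^n) Σ_U Im Σ_{k=1}^{K} ⟨φ_a, U† L_k U φ_a⟩ · ⟨φ_b, U† L_k† U φ_b⟩ = 0. -/

import Mathlib

open Matrix Complex BigOperators

/-- The four single-qubit Pauli matrices I, X, Y, Z. -/
noncomputable def sigma1q : Fin 4 → Matrix (Fin 2) (Fin 2) ℂ :=
  ![!![1, 0; 0, 1], !![0, 1; 1, 0], !![0, -Complex.I; Complex.I, 0], !![1, 0; 0, -1]]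

/-- The n-qubit Pauli operator `σ_{s 0} ⊗ ⋯ ⊗ σ_{s (n-1)}`, realized as a matrix
indexed by `Fin n → Fin 2` (entrywise Kronecker product). -/
noncomputable def pauli (n : ℕ) (s : Fin n → Fin 4) :
    Matrix (Fin n → Fin 2) (Fin n → Fin 2) ℂ :=
  Matrix.of fun i j => ∏ k, sigma1q (s k) (i k) (j k)

/-- The sesquilinear form `⟨x, A y⟩ = x† A y`. -/
noncomputable def sesq {n : ℕ} (x : (Fin n → Fin 2) → ℂ)
    (A : Matrix (Fin n → Fin 2) (Fin n → Fin 2) ℂ) (y : (Fin n → Fin 2) → ℂ) : ℂ :=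
  star x ⬝ᵥ (A *ᵥ y)

/-- The outer product `|a⟩⟨b| = a b†`. -/
noncomputable def outer {n : ℕ} (a b : (Fin n → Fin 2) → ℂ) :
    Matrix (Fin n → Fin 2) (Fin n → Fin 2) ℂ :=
  Matrix.vecMulVec a (star b)

/-!
Expand `L = 2⁻ⁿ ∑ₜ tr(Pₜ L) Pₜ` in the Pauli basis. Conjugating by a Pauli `Pₛ` multiplies `Pₜ` by
the sign `χ(s, t) = ±1` recording whether `Pₛ` and `Pₜ` commute, and these signs are orthogonal:
`∑ₛ χ(s, t) χ(s, t') = 4ⁿ δₜₜ'`. Hence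
`∑ₛ ⟨φ, Pₛ M Pₛ φ⟩ ⟨ψ, Pₛ N Pₛ ψ⟩ = ∑ₜ tr(Pₜ M) tr(Pₜ N) ⟨φ, Pₜ φ⟩ ⟨ψ, Pₜ ψ⟩`, and for `N = M†`
each term is `|tr(Pₜ M)|²` times two real expectation values.
-/

namespace Matrix

variable {ι m R : Type*} [Fintype ι] [CommSemiring R]

def piKronecker (A : ι → Matrix m m R) : Matrix (ι → m) (ι → m) R :=
  of fun i j => ∏ k, A k (i k) (j k)

theorem piKronecker_apply (A : ι → Matrix m m R) (i j : ι → m) :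
    piKronecker A i j = ∏ k, A k (i k) (j k) := rfl

theorem piKronecker_mul [DecidableEq ι] [Fintype m] (A B : ι → Matrix m m R) :
    piKronecker A * piKronecker B = piKronecker (A * B) := by
  ext i j
  simp only [mul_apply, piKronecker_apply, Pi.mul_apply, Fintype.prod_sum,
    ← Finset.prod_mul_distrib]

theorem piKronecker_smul (c : ι → R) (A : ι → Matrix m m R) :
    piKronecker (fun k => c k • A k) = (∏ k, c k) • piKronecker A := by
  ext i j
  simp only [piKronecker_apply, Matrix.smul_apply, smul_eq_mul, Finset.prod_mul_distrib]

theorem piKronecker_conjTranspose [StarRing R] (A : ι → Matrix m m R) :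
    (piKronecker A)ᴴ = piKronecker fun k => (A k)ᴴ := by
  ext i j
  simp only [conjTranspose_apply, piKronecker_apply, star_prod]

end Matrix

open Finset

theorem pauli_eq_piKronecker (n : ℕ) (s : Fin n → Fin 4) :
    pauli n s = piKronecker fun k => sigma1q (s k) := rfl

theorem sigma1q_conjTranspose (a : Fin 4) : (sigma1q a)ᴴ = sigma1q a := by
  ext i j
  fin_cases a <;> fin_cases i <;> fin_cases j <;> simp [sigma1q]

def sigmaSign (a b : Fin 4) : ℤ := if a = 0 ∨ b = 0 ∨ a = b then 1 else -1

theorem sigma1q_mul_mul_self (a b : Fin 4) :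
    sigma1q a * sigma1q b * sigma1q a = (sigmaSign a b : ℂ) • sigma1q b := by
  ext i j
  fin_cases a <;> fin_cases b <;> fin_cases i <;> fin_cases j <;>
    simp [sigma1q, sigmaSign, mul_apply, Fin.sum_univ_two]

theorem sum_sigmaSign_mul_sigmaSign (b c : Fin 4) :
    ∑ a, sigmaSign a b * sigmaSign a c = if b = c then 4 else 0 := by
  revert b c; decide

theorem sum_sigma1q_apply_mul_sigma1q_apply (a b c d : Fin 2) :
    ∑ t, sigma1q t c d * sigma1q t a b = if c = b ∧ d = a then 2 else 0 := by
  fin_cases a <;> fin_cases b <;> fin_cases c <;> fin_cases d <;>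
    simp [sigma1q, Fin.sum_univ_four, one_add_one_eq_two]

theorem pauli_isHermitian (n : ℕ) (s : Fin n → Fin 4) : (pauli n s).IsHermitian := by
  simp only [IsHermitian, pauli_eq_piKronecker, piKronecker_conjTranspose, sigma1q_conjTranspose]

def pauliSign {n : ℕ} (s t : Fin n → Fin 4) : ℤ := ∏ k, sigmaSign (s k) (t k)

theorem pauli_mul_mul_self (n : ℕ) (s t : Fin n → Fin 4) :
    pauli n s * pauli n t * pauli n s = (pauliSign s t : ℂ) • pauli n t := by
  simp only [pauli_eq_piKronecker, piKronecker_mul, pauliSign, Int.cast_prod]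
  rw [← piKronecker_smul]
  exact congrArg piKronecker (funext fun k => sigma1q_mul_mul_self (s k) (t k))

theorem sum_pauliSign_mul_pauliSign {n : ℕ} (t t' : Fin n → Fin 4) :
    ∑ s, pauliSign s t * pauliSign s t' = if t = t' then 4 ^ n else 0 := by
  simp only [pauliSign, ← prod_mul_distrib]
  rw [← Fintype.prod_sum (fun k a => sigmaSign a (t k) * sigmaSign a (t' k))]
  simp only [sum_sigmaSign_mul_sigmaSign, Fintype.prod_ite_zero, ← funext_iff, prod_const,
    card_univ, Fintype.card_fin]

theorem sum_pauli_apply_mul_pauli_apply (n : ℕ) (a b c d : Fin n → Fin 2) :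
    ∑ t, pauli n t c d * pauli n t a b = if c = b ∧ d = a then 2 ^ n else 0 := by
  simp only [pauli_eq_piKronecker, piKronecker_apply, ← prod_mul_distrib]
  rw [← Fintype.prod_sum (fun k t => sigma1q t (c k) (d k) * sigma1q t (a k) (b k))]
  simp only [sum_sigma1q_apply_mul_sigma1q_apply, Fintype.prod_ite_zero, forall_and,
    ← funext_iff, prod_const, card_univ, Fintype.card_fin]

theorem pauli_expansion (n : ℕ) (M : Matrix (Fin n → Fin 2) (Fin n → Fin 2) ℂ) :
    M = ∑ t, (trace (pauli n t * M) / 2 ^ n) • pauli n t := by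
  ext a b
  calc M a b = (∑ c, ∑ d, M d c * ∑ t, pauli n t c d * pauli n t a b) / 2 ^ n := by
        simp [sum_pauli_apply_mul_pauli_apply, ite_and]
    _ = ∑ t, ∑ c, ∑ d, pauli n t c d * M d c / 2 ^ n * pauli n t a b := by
        simp only [mul_sum, sum_div]
        rw [sum_comm]
        simp_rw [sum_comm (γ := Fin n → Fin 4)]
        rw [sum_comm]
        exact sum_congr rfl fun _ _ => sum_congr rfl fun _ _ => sum_congr rfl fun _ _ => by ring
    _ = _ := by
        simp only [Matrix.sum_apply, Matrix.smul_apply, smul_eq_mul, trace, diag_apply, mul_apply,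
          sum_mul, sum_div]

theorem sesq_sum_smul {n : ℕ} {ι : Type*} [Fintype ι] (x y : (Fin n → Fin 2) → ℂ) (c : ι → ℂ)
    (A : ι → Matrix (Fin n → Fin 2) (Fin n → Fin 2) ℂ) :
    sesq x (∑ t, c t • A t) y = ∑ t, c t * sesq x (A t) y := by
  simp only [sesq, sum_mulVec, smul_mulVec, dotProduct_sum, dotProduct_smul, smul_eq_mul]

theorem sesq_pauli_mul_mul_pauli (n : ℕ) (M : Matrix (Fin n → Fin 2) (Fin n → Fin 2) ℂ)
    (φ : (Fin n → Fin 2) → ℂ) (s : Fin n → Fin 4) :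
    sesq φ (pauli n s * M * pauli n s) φ =
      ∑ t, (pauliSign s t : ℂ) * (trace (pauli n t * M) / 2 ^ n * sesq φ (pauli n t) φ) := by
  conv_lhs => rw [pauli_expansion n M]
  simp only [mul_sum, sum_mul, Matrix.mul_smul, Matrix.smul_mul, pauli_mul_mul_self,
    smul_smul, sesq_sum_smul]
  exact sum_congr rfl fun t _ => by ring

theorem sum_pauliSign_mul_sum_pauliSign_mul {n : ℕ} (a b : (Fin n → Fin 4) → ℂ) :
    ∑ s, (∑ t, (pauliSign s t : ℂ) * a t) * (∑ t, (pauliSign s t : ℂ) * b t) =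
      4 ^ n * ∑ t, a t * b t := by
  calc ∑ s, (∑ t, (pauliSign s t : ℂ) * a t) * (∑ t, (pauliSign s t : ℂ) * b t)
      = ∑ t, ∑ t', a t * b t' * ((∑ s, pauliSign s t * pauliSign s t' : ℤ) : ℂ) := by
        simp_rw [sum_mul_sum]
        simp only [Int.cast_sum, Int.cast_mul, mul_sum]
        rw [sum_comm]
        refine sum_congr rfl fun t _ => ?_
        rw [sum_comm]
        exact sum_congr rfl fun t' _ => sum_congr rfl fun s _ => by ring
    _ = 4 ^ n * ∑ t, a t * b t := by
        simp [sum_pauliSign_mul_pauliSign, mul_sum, mul_comm]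

theorem sum_sesq_pauli_mul_mul_pauli_mul (n : ℕ) (M N : Matrix (Fin n → Fin 2) (Fin n → Fin 2) ℂ)
    (φ ψ : (Fin n → Fin 2) → ℂ) :
    ∑ s, sesq φ (pauli n s * M * pauli n s) φ * sesq ψ (pauli n s * N * pauli n s) ψ =
      ∑ t, trace (pauli n t * M) * trace (pauli n t * N) *
        (sesq φ (pauli n t) φ * sesq ψ (pauli n t) ψ) := by
  simp only [sesq_pauli_mul_mul_pauli]
  rw [sum_pauliSign_mul_sum_pauliSign_mul, mul_sum]
  refine sum_congr rfl fun t _ => ?_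
  have h4 : (4 : ℂ) ^ n = 2 ^ n * 2 ^ n := by rw [← mul_pow]; norm_num
  field_simp
  rw [h4]
  ring

theorem im_trace_mul_mul_trace_mul_conjTranspose {m : Type*} [Fintype m]
    {P : Matrix m m ℂ} (hP : P.IsHermitian) (M : Matrix m m ℂ) :
    (trace (P * M) * trace (P * Mᴴ)).im = 0 := by
  have : trace (P * Mᴴ) = star (trace (P * M)) := by
    rw [← trace_conjTranspose, conjTranspose_mul, hP.eq, trace_mul_comm]
  rw [this, Complex.star_def, Complex.mul_conj, Complex.ofReal_im]

theorem Matrix.IsHermitian.im_sesq_self {n : ℕ} {H : Matrix (Fin n → Fin 2) (Fin n → Fin 2) ℂ}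
    (hH : H.IsHermitian) (φ : (Fin n → Fin 2) → ℂ) : (sesq φ H φ).im = 0 :=
  hH.im_star_dotProduct_mulVec_self φ

theorem pauli_average_stochastic_noise_im_eq_zero_general {n K : ℕ}
    (L : Fin K → Matrix (Fin n → Fin 2) (Fin n → Fin 2) ℂ)
    (φa φb : (Fin n → Fin 2) → ℂ) :
    (1 / 4 ^ n : ℝ) *
      ∑ s : Fin n → Fin 4,
        (∑ k, sesq φa ((pauli n s)ᴴ * L k * pauli n s) φa *
          sesq φb ((pauli n s)ᴴ * (L k)ᴴ * pauli n s) φb).im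
      = 0 := by
  have hreal (k : Fin K) : (∑ s, sesq φa ((pauli n s)ᴴ * L k * pauli n s) φa *
      sesq φb ((pauli n s)ᴴ * (L k)ᴴ * pauli n s) φb).im = 0 := by
    simp [(pauli_isHermitian n _).eq, sum_sesq_pauli_mul_mul_pauli_mul, Complex.mul_im,
      im_trace_mul_mul_trace_mul_conjTranspose (pauli_isHermitian n _),
      (pauli_isHermitian n _).im_sesq_self]
  rw [← Complex.im_sum, sum_comm, Complex.im_sum, sum_eq_zero fun k _ => hreal k, mul_zero]

/-- Averaged over all n-qubit Paulis `U`, the stochastic-noise contribution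
`Im Σ_k ⟨φ_a, U†L_kU φ_a⟩ ⟨φ_b, U†L_k†U φ_b⟩` vanishes. -/
theorem pauli_average_stochastic_noise_im_eq_zero {n K : ℕ} (hn : 1 ≤ n)
    (L : Fin K → Matrix (Fin n → Fin 2) (Fin n → Fin 2) ℂ)
    (φa φb : (Fin n → Fin 2) → ℂ) :
    (1 / 4 ^ n : ℝ) *
      ∑ s : Fin n → Fin 4,
        (∑ k, sesq φa ((pauli n s)ᴴ * L k * pauli n s) φa *
          sesq φb ((pauli n s)ᴴ * (L k)ᴴ * pauli n s) φb).im
      = 0 :=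
  pauli_average_stochastic_noise_im_eq_zero_general L φa φb
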